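/- arXiv:2204.13946 — 2 statements merged into one kernel-verified Lean document; each statement's English description precedes it below -/
import Mathlib

section
/- Let F(α) be the free group on a set α and let a, b ∈ α be distinct generators. For all integers t₁, t₂, t₃ the following are equivalent: (i) t₃ = t₁ · t₂; (ii) there exist u, v ∈ F(α) such that u commutes with b, v commutes with a·u, φ_b(u) = t₁, φ_a(v) = t₂, and φ_b(v) = t₃. -/
/-!
Commuting elements of a free group are powers of a common element: the subgroup they generate
is free (Nielsen–Schreier) and abelian, hence cyclic. So for any two homomorphisms `φ ψ` to `ℤ`
and commuting `x y` we get `φ x * ψ y = φ y * ψ x`. For `u` and `b` this forces `φ_a u = 0`;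
for `v` and `a * u` it reads `φ_a v * φ_b (a u) = φ_a (a u) * φ_b v`, that is `t₂ t₁ = t₃`.
Conversely `u = b ^ t₁` and `v = (a * b ^ t₁) ^ t₂` are witnesses.
-/

namespace FreeGroup

theorem not_commute_of_ne {β : Type*} {x y : β} (h : x ≠ y) :
    ¬Commute (of x) (of y) := by
  classical
  intro hxy
  -- Send `x` and `y` to two transpositions of `Fin 3` that do not commute.
  let f : β → Equiv.Perm (Fin 3) := fun c =>
    if c = x then Equiv.swap 0 1 else if c = y then Equiv.swap 1 2 else 1
  have hf := (hxy.map (lift f)).eq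
  simp only [lift_apply_of, f, ↓reduceIte, if_neg h.symm] at hf
  exact absurd hf (by decide)

instance isCyclic_of_subsingleton {β : Type*} [Subsingleton β] : IsCyclic (FreeGroup β) := by
  rcases isEmpty_or_nonempty β with hβ | hβ
  · infer_instance
  · have : Unique β := uniqueOfSubsingleton (Classical.choice hβ)
    infer_instance

end FreeGroup

namespace IsFreeGroup

variable {G : Type*} [Group G] [IsFreeGroup G]

theorem isCyclic_of_isMulCommutative [IsMulCommutative G] : IsCyclic G := by
  obtain ⟨ι, ⟨B⟩⟩ := IsFreeGroup.nonempty_basis (G := G)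
  have : Subsingleton ι := ⟨fun i j => by_contra fun hij => by
    have hBij : Commute (B i) (B j) := Std.Commutative.comm _ _
    exact FreeGroup.not_commute_of_ne hij (by simpa using hBij.map B.repr)⟩
  exact (B.repr.isCyclic).mpr inferInstance

theorem exists_zpow_eq_of_commute {x y : G} (h : Commute x y) :
    ∃ (z : G) (m n : ℤ), x = z ^ m ∧ y = z ^ n := by
  let H := Subgroup.closure ({x, y} : Set G)
  have : IsMulCommutative H := Subgroup.isMulCommutative_closure (by
    simp only [Set.mem_insert_iff, Set.mem_singleton_iff]
    rintro _ (rfl | rfl) _ (rfl | rfl) <;> first | rfl | exact h.eq | exact h.eq.symm)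
  have : IsCyclic H := isCyclic_of_isMulCommutative
  obtain ⟨z, hz⟩ := IsCyclic.exists_generator (α := H)
  obtain ⟨m, hm⟩ := Subgroup.mem_zpowers_iff.mp (hz ⟨x, Subgroup.subset_closure (by simp)⟩)
  obtain ⟨n, hn⟩ := Subgroup.mem_zpowers_iff.mp (hz ⟨y, Subgroup.subset_closure (by simp)⟩)
  exact ⟨z, m, n, by simpa using congrArg Subtype.val hm.symm,
    by simpa using congrArg Subtype.val hn.symm⟩

theorem toAdd_mul_toAdd_eq_of_commute (φ ψ : G →* Multiplicative ℤ) {x y : G}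
    (h : Commute x y) :
    (φ x).toAdd * (ψ y).toAdd = (φ y).toAdd * (ψ x).toAdd := by
  obtain ⟨z, m, n, rfl, rfl⟩ := exists_zpow_eq_of_commute h
  simp only [map_zpow, toAdd_zpow, smul_eq_mul]
  ring

end IsFreeGroup

/-- Encoding of integer multiplication via exponent-sum constraints in a free group:
for distinct generators `a ≠ b` and exponent-sum homomorphisms `φa`, `φb` (sending `a`
resp. `b` to `1` and all other generators to `0`), we have `t₃ = t₁ * t₂` iff there
exist `u, v` with `u` commuting with `b`, `v` commuting with `a * u`, `φb u = t₁`,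
`φa v = t₂` and `φb v = t₃`. -/
theorem stmt_6 (α : Type*) (a b : α) (hab : a ≠ b)
    (φa φb : FreeGroup α →* Multiplicative ℤ)
    (hφa1 : φa (FreeGroup.of a) = Multiplicative.ofAdd (1 : ℤ))
    (hφa0 : ∀ c : α, c ≠ a → φa (FreeGroup.of c) = 1)
    (hφb1 : φb (FreeGroup.of b) = Multiplicative.ofAdd (1 : ℤ))
    (hφb0 : ∀ c : α, c ≠ b → φb (FreeGroup.of c) = 1)
    (t₁ t₂ t₃ : ℤ) :
    t₃ = t₁ * t₂ ↔
      ∃ u v : FreeGroup α,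
        Commute u (FreeGroup.of b) ∧
        Commute v (FreeGroup.of a * u) ∧
        Multiplicative.toAdd (φb u) = t₁ ∧
        Multiplicative.toAdd (φa v) = t₂ ∧
        Multiplicative.toAdd (φb v) = t₃ := by
  have hφab : φa (FreeGroup.of b) = 1 := hφa0 b hab.symm
  have hφba : φb (FreeGroup.of a) = 1 := hφb0 a hab
  constructor
  · rintro rfl
    refine ⟨FreeGroup.of b ^ t₁, (FreeGroup.of a * FreeGroup.of b ^ t₁) ^ t₂,
      (Commute.refl _).zpow_left t₁, (Commute.refl _).zpow_left t₂, ?_, ?_, ?_⟩ <;>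
    simp [hφa1, hφb1, hφab, hφba, mul_comm]
  · rintro ⟨u, v, hu, hv, rfl, rfl, rfl⟩
    have hφau : (φa u).toAdd = 0 := by
      simpa [hφab, hφb1] using IsFreeGroup.toAdd_mul_toAdd_eq_of_commute φa φb hu
    simpa [hφa1, hφba, hφau, mul_comm] using
      (IsFreeGroup.toAdd_mul_toAdd_eq_of_commute φa φb hv).symm
end

section
/- Let Γ be a simple graph on a finite nonempty vertex set V, and suppose that for any two weak modules S and T of Γ we have star(S) ∩ T ≠ ∅ (i.e. some vertex of S is adjacent to, or equal to, some vertex of T). Let M be the set of all minimal vertices of Γ. Then M is a clique, and M ⊆ star(u) for every vertex u ∈ V (every vertex of Γ is adjacent to, or equal to, every minimal vertex). -/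
/-- The star of a vertex: the vertex together with its neighbours. -/
def vertexStar {V : Type*} (Γ : SimpleGraph V) (v : V) : Set V :=
  insert v (Γ.neighborSet v)

/-- The star of a set of vertices: `S` together with the common neighbours of `S`. -/
def setStar {V : Type*} (Γ : SimpleGraph V) (S : Set V) : Set V :=
  S ∪ ⋂ v ∈ S, Γ.neighborSet v

/-- A vertex is minimal if no vertex has a strictly smaller star. -/
def IsMinVertex {V : Type*} (Γ : SimpleGraph V) (v : V) : Prop :=
  ∀ u : V, vertexStar Γ u ⊆ vertexStar Γ v → vertexStar Γ u = vertexStar Γ v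

/-- A weak set: a nonempty set of minimal vertices, all with the same star. -/
def IsWeakSet {V : Type*} (Γ : SimpleGraph V) (S : Set V) : Prop :=
  S.Nonempty ∧ (∀ v ∈ S, IsMinVertex Γ v) ∧
    ∀ u ∈ S, ∀ v ∈ S, vertexStar Γ u = vertexStar Γ v

/-- A weak module: a weak set which is maximal under inclusion among weak sets. -/
def IsWeakModule {V : Type*} (Γ : SimpleGraph V) (S : Set V) : Prop :=
  IsWeakSet Γ S ∧ ∀ T : Set V, IsWeakSet Γ T → S ⊆ T → T = S


/-!
The stars of two minimal vertices `m` and `n` with different stars are linked through their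
weak modules: the hypothesis yields a vertex of the module of `n` that is a common neighbour of
the module of `m`, so `m` lies in a star equal to `star n`. Hence every minimal vertex lies in
the star of every other minimal vertex; and since every star contains the star of some minimal
vertex (finiteness), every minimal vertex lies in every star.
-/

section

variable {V : Type*} (Γ : SimpleGraph V)

lemma mem_vertexStar_self (v : V) : v ∈ vertexStar Γ v := Set.mem_insert v _

lemma mem_vertexStar_comm {u v : V} : u ∈ vertexStar Γ v ↔ v ∈ vertexStar Γ u := by
  simp only [vertexStar, Set.mem_insert_iff, SimpleGraph.mem_neighborSet, eq_comm (a := u),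
    SimpleGraph.adj_comm]

def weakModuleOf (u : V) : Set V :=
  {v | IsMinVertex Γ v ∧ vertexStar Γ v = vertexStar Γ u}

lemma isWeakModule_weakModuleOf {u : V} (hu : IsMinVertex Γ u) :
    IsWeakModule Γ (weakModuleOf Γ u) := by
  refine ⟨⟨⟨u, hu, rfl⟩, fun v hv => hv.1, fun a ha b hb => ha.2.trans hb.2.symm⟩, ?_⟩
  rintro T ⟨-, hTmin, hTstar⟩ hsub
  exact Set.Subset.antisymm (fun t ht => ⟨hTmin t ht, hTstar t ht u (hsub ⟨hu, rfl⟩)⟩) hsub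

lemma exists_isMinVertex_vertexStar_subset [Finite V] (u : V) :
    ∃ a, IsMinVertex Γ a ∧ vertexStar Γ a ⊆ vertexStar Γ u := by
  obtain ⟨a, ha, hmin⟩ := Set.Finite.exists_minimalFor (vertexStar Γ)
    {x | vertexStar Γ x ⊆ vertexStar Γ u} (Set.toFinite _)
    ⟨u, (subset_refl _ : vertexStar Γ u ⊆ _)⟩
  exact ⟨a, fun x hx => Set.Subset.antisymm hx (hmin (hx.trans ha) hx), ha⟩

lemma mem_vertexStar_of_isMinVertex
    (h : ∀ S T : Set V, IsWeakModule Γ S → IsWeakModule Γ T → (setStar Γ S ∩ T).Nonempty)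
    {m n : V} (hm : IsMinVertex Γ m) (hn : IsMinVertex Γ n) : m ∈ vertexStar Γ n := by
  obtain ⟨t, htm | htm, -, htn⟩ :=
    h _ _ (isWeakModule_weakModuleOf Γ hm) (isWeakModule_weakModuleOf Γ hn)
  · rw [← htn, htm.2]
    exact mem_vertexStar_self Γ m
  · have hmt : t ∈ Γ.neighborSet m := Set.mem_iInter₂.mp htm m ⟨hm, rfl⟩
    rw [← htn, mem_vertexStar_comm]
    exact Or.inr hmt

end

theorem stmt_11_general (V : Type*) [Fintype V] (Γ : SimpleGraph V)
    (h : ∀ S T : Set V, IsWeakModule Γ S → IsWeakModule Γ T →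
      (setStar Γ S ∩ T).Nonempty) :
    Γ.IsClique {v : V | IsMinVertex Γ v} ∧
      ∀ u : V, {v : V | IsMinVertex Γ v} ⊆ vertexStar Γ u := by
  refine ⟨fun m hm n hn hne => ?_, fun u m hm => ?_⟩
  · obtain rfl | hadj := mem_vertexStar_of_isMinVertex Γ h hn hm
    exacts [absurd rfl hne, hadj]
  · obtain ⟨a, ha, hau⟩ := exists_isMinVertex_vertexStar_subset Γ u
    exact hau (mem_vertexStar_of_isMinVertex Γ h hm ha)

/-- If any two weak modules `S`, `T` satisfy `star S ∩ T ≠ ∅`, then the set `M` of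
minimal vertices is a clique and `M ⊆ star u` for every vertex `u`. -/
theorem stmt_11 (V : Type*) [Fintype V] [Nonempty V] (Γ : SimpleGraph V)
    (h : ∀ S T : Set V, IsWeakModule Γ S → IsWeakModule Γ T →
      (setStar Γ S ∩ T).Nonempty) :
    Γ.IsClique {v : V | IsMinVertex Γ v} ∧
      ∀ u : V, {v : V | IsMinVertex Γ v} ⊆ vertexStar Γ u :=
  stmt_11_general V Γ h
end
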